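/- arXiv:1211.0201 — 3 statements merged into one kernel-verified Lean document; each statement's English description precedes it below -/
import Mathlib

section
/- Let H_*(B) and H_*^{S^1}(B) be graded rational vector spaces fitting into a long exact (Gysin-type) sequence ... → H_i(B) → H_i^{S^1}(B) → H_{i-2}^{S^1}(B) → H_{i-1}(B) → ... . Suppose each H_i(B) is finite dimensional, there is N_0 such that H_i(B)=0 for |i|>N_0, the dimensions dim H_i^{S^1}(B) are uniformly bounded, and H_*^{S^1}(B) is index-positive (i.e. there is N with H_i^{S^1}(B)=0 for all i<N). Then the mean Euler characteristic χ_m(H_*^{S^1}(B)) := lim_{N→∞} (1/N) Σ_{i=-N}^{N} (-1)^i dim H_i^{S^1}(B) exists and equals χ(H_*(B))/2, where χ(H_*(B)) = Σ_i (-1)^i dim H_i(B). -/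
/-!
Put `s i = dim H_i^{S^1}`, `b i = dim H_i` and `a i = rank (H_i → H_i^{S^1})`. Rank–nullity along
the Gysin sequence gives `s i - s (i - 2) = a i + a (i - 1) - b (i - 1)`; with signs `(-1) ^ i` this
telescopes, so that `(-1) ^ i s i + (-1) ^ (i + 1) s (i + 1) = χ(H_*)` once `i` lies above the
support of `H_*`. Since `H_*^{S^1}` vanishes in low degrees, the symmetric partial sums of
`(-1) ^ i s i` then grow by `χ(H_*)` every two steps, which forces their mean to tend to `χ(H_*) / 2`.
-/

open Filter Finset Topology

theorem tendsto_one_div_mul_of_add_two_eq (g : ℕ → ℝ) (c : ℝ) (M : ℕ)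
    (hg : ∀ N ≥ M, g (N + 2) = g N + c) :
    Tendsto (fun N : ℕ => (1 / (N : ℝ)) * g N) atTop (𝓝 (c / 2)) := by
  set h : ℕ → ℝ := fun N => g N - N * c / 2
  set B := max |h M| |h (M + 1)|
  have hB : ∀ N ≥ M, |h N| ≤ B ∧ |h (N + 1)| ≤ B := by
    intro N hN
    induction N, hN using Nat.le_induction with
    | base => exact ⟨le_max_left _ _, le_max_right _ _⟩
    | succ N hN ih =>
      have hper : h (N + 2) = h N := by
        simp only [h, hg N hN]
        push_cast
        ring
      exact ⟨ih.2, hper ▸ ih.1⟩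
  have hbdd : IsBoundedUnder (· ≤ ·) atTop (norm ∘ h) :=
    isBoundedUnder_of_eventually_le (a := B) (eventually_atTop.2 ⟨M, fun N hN => (hB N hN).1⟩)
  have hlim := (tendsto_one_div_atTop_nhds_zero_nat.zero_mul_isBoundedUnder_le hbdd).add_const
    (c / 2)
  rw [zero_add] at hlim
  refine hlim.congr' (eventually_atTop.2 ⟨1, fun N hN => ?_⟩)
  have hN0 : (N : ℝ) ≠ 0 := by positivity
  simp only [h]
  field_simp
  ring

theorem sum_Icc_neg_add_one {M : Type*} [AddCommMonoid M] (f : ℤ → M) {n : ℤ} (hn : 0 ≤ n) :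
    ∑ i ∈ Icc (-(n + 1)) (n + 1), f i = f (-(n + 1)) + ∑ i ∈ Icc (-n) n, f i + f (n + 1) := by
  have hIcc : Icc (-(n + 1)) (n + 1) = insert (-(n + 1)) (insert (n + 1) (Icc (-n) n)) := by
    ext i
    simp only [mem_Icc, mem_insert]
    omega
  rw [hIcc, sum_insert (by simp only [mem_insert, mem_Icc]; omega),
    sum_insert (by simp only [mem_Icc]; omega)]
  abel

theorem tendsto_mean_of_add_succ_eq (f : ℤ → ℝ) (c : ℝ) (L M : ℤ) (hf : ∀ i < L, f i = 0)
    (hpair : ∀ i ≥ M, f i + f (i + 1) = c) :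
    Tendsto (fun N : ℕ => (1 / (N : ℝ)) * ∑ i ∈ Icc (-(N : ℤ)) N, f i) atTop (𝓝 (c / 2)) := by
  refine tendsto_one_div_mul_of_add_two_eq _ c (max (-L) M).toNat fun N hN => ?_
  have hcast : ((N + 2 : ℕ) : ℤ) = N + 1 + 1 := by push_cast; ring
  rw [hcast, sum_Icc_neg_add_one f (by omega), sum_Icc_neg_add_one f (by omega),
    hf _ (by omega), hf _ (by omega), ← hpair (N + 1) (by omega)]
  abel

theorem sum_Ico_sub_int {M : Type*} [AddCommGroup M] (D : ℤ → M) {L K : ℤ} (h : L ≤ K) :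
    ∑ j ∈ Ico L K, (D (j + 1) - D j) = D K - D L := by
  induction K, h using Int.leInduction with
  | base => simp
  | succ K hLK ih =>
    rw [← sum_Ico_add_eq_sum_Ico_add_one hLK, ih]
    abel

theorem add_succ_eq_sum_of_sub_two_eq {M : Type*} [AddCommGroup M] (f a b : ℤ → M)
    (h : ∀ i, f i - f (i - 2) = a i - a (i - 1) + b (i - 1)) (L U : ℤ) (S : Finset ℤ)
    (hLU : L ≤ U) (hS : S ⊆ Icc L U) (hf : ∀ i < L, f i = 0) (ha : ∀ i, i < L ∨ U < i → a i = 0)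
    (hb : ∀ i ∉ S, b i = 0) (i : ℤ) (hi : U ≤ i) :
    f i + f (i + 1) = ∑ j ∈ S, b j := by
  set D : ℤ → M := fun j => f j + f (j - 1) - a j
  have hD : ∀ j, D (j + 1) - D j = b j := by
    intro j
    have hj := h (j + 1)
    rw [show j + 1 - 2 = j - 1 by ring, add_sub_cancel_right] at hj
    simp only [D, add_sub_cancel_right]
    rw [eq_sub_of_add_eq' hj.symm]
    abel
  have hDL : D (L - 1) = 0 := by
    simp only [D, hf (L - 1) (by omega), hf (L - 1 - 1) (by omega), ha (L - 1) (.inl (by omega)),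
      add_zero, sub_zero]
  have htel := sum_Ico_sub_int D (show L - 1 ≤ i + 1 by omega)
  rw [sum_congr rfl fun j _ => hD j, hDL, sub_zero] at htel
  simp only [D, add_sub_cancel_right, ha (i + 1) (.inr (by omega)), sub_zero] at htel
  rw [add_comm, ← htel]
  refine (sum_subset (fun j hj => ?_) fun j _ hj => hb j hj).symm
  have := hS hj
  simp only [mem_Icc, mem_Ico] at this ⊢
  omega

theorem finrank_eq_finrank_range_add_finrank_range {K L M P : Type*} [DivisionRing K]
    [AddCommGroup L] [Module K L] [AddCommGroup M] [Module K M] [AddCommGroup P] [Module K P]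
    [FiniteDimensional K M] {f : L →ₗ[K] M} {g : M →ₗ[K] P} (hfg : Function.Exact f g) :
    Module.finrank K M =
      Module.finrank K (LinearMap.range f) + Module.finrank K (LinearMap.range g) := by
  rw [← LinearMap.finrank_range_add_finrank_ker g, LinearMap.exact_iff.mp hfg, add_comm]

section Gysin

variable {K : Type*} [DivisionRing K] {HB HS : ℤ → Type*}
  [∀ i, AddCommGroup (HB i)] [∀ i, Module K (HB i)] [∀ i, AddCommGroup (HS i)]
  [∀ i, Module K (HS i)] [∀ i, FiniteDimensional K (HB i)] [∀ i, FiniteDimensional K (HS i)]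
  {α : ∀ i : ℤ, HB i →ₗ[K] HS i} {β : ∀ i : ℤ, HS i →ₗ[K] HS (i - 2)}
  {γ : ∀ i : ℤ, HS (i - 2) →ₗ[K] HB (i - 1)}

theorem finrank_add_finrank_eq_of_exact (hαβ : ∀ i, Function.Exact (α i) (β i))
    (hβγ : ∀ i, Function.Exact (β i) (γ i)) (hγα : ∀ i, Function.Exact (γ i) (α (i - 1)))
    (i : ℤ) :
    Module.finrank K (HS i) + Module.finrank K (HB (i - 1)) =
      Module.finrank K (HS (i - 2)) + Module.finrank K (LinearMap.range (α i)) +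
        Module.finrank K (LinearMap.range (α (i - 1))) := by
  have hS := finrank_eq_finrank_range_add_finrank_range (hαβ i)
  have hS₂ := finrank_eq_finrank_range_add_finrank_range (hβγ i)
  have hB := finrank_eq_finrank_range_add_finrank_range (hγα i)
  omega

end Gysin

theorem neg_one_zpow_sub_two {R : Type*} [DivisionRing R] (i : ℤ) :
    (-1 : R) ^ (i - 2) = (-1) ^ i := by
  rw [zpow_sub₀ (by norm_num), zpow_two]
  norm_num

theorem neg_one_zpow_sub_one {R : Type*} [DivisionRing R] (i : ℤ) :
    (-1 : R) ^ (i - 1) = -(-1) ^ i := by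
  rw [zpow_sub_one₀ (by norm_num)]
  norm_num

theorem stmt0_general
    (HB HS : ℤ → Type) [∀ i, AddCommGroup (HB i)] [∀ i, Module ℚ (HB i)]
    [∀ i, AddCommGroup (HS i)] [∀ i, Module ℚ (HS i)]
    [∀ i, FiniteDimensional ℚ (HB i)] [∀ i, FiniteDimensional ℚ (HS i)]
    (α : ∀ i : ℤ, HB i →ₗ[ℚ] HS i)
    (β : ∀ i : ℤ, HS i →ₗ[ℚ] HS (i - 2))
    (γ : ∀ i : ℤ, HS (i - 2) →ₗ[ℚ] HB (i - 1))
    (hαβ : ∀ i, Function.Exact (α i) (β i))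
    (hβγ : ∀ i, Function.Exact (β i) (γ i))
    (hγα : ∀ i, Function.Exact (γ i) (α (i - 1)))
    (N₀ : ℕ) (hvanish : ∀ i : ℤ, (N₀ : ℤ) < |i| → Subsingleton (HB i))
    (N₁ : ℤ) (hidxpos : ∀ i < N₁, Subsingleton (HS i)) :
    Tendsto
      (fun N : ℕ =>
        (1 / (N : ℝ)) *
          ∑ i ∈ Finset.Icc (-(N : ℤ)) (N : ℤ), (-1 : ℝ) ^ i * (Module.finrank ℚ (HS i) : ℝ))
      atTop
      (𝓝 ((∑ i ∈ Finset.Icc (-(N₀ : ℤ)) (N₀ : ℤ),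
            (-1 : ℝ) ^ i * (Module.finrank ℚ (HB i) : ℝ)) / 2)) := by
  have hB0 : ∀ i ∉ Icc (-(N₀ : ℤ)) N₀, Module.finrank ℚ (HB i) = 0 := fun i hi =>
    have := hvanish i (by rw [mem_Icc] at hi; rw [lt_abs]; omega)
    Module.finrank_zero_of_subsingleton
  have hS0 : ∀ i < N₁, Module.finrank ℚ (HS i) = 0 := fun i hi =>
    have := hidxpos i hi
    Module.finrank_zero_of_subsingleton
  have ha0 : ∀ i, i < min N₁ (-N₀) ∨ (N₀ : ℤ) < i →
      Module.finrank ℚ (LinearMap.range (α i)) = 0 := by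
    rintro i (hi | hi)
    · simpa [hS0 i (by omega)] using Submodule.finrank_le (LinearMap.range (α i))
    · simpa [hB0 i (by rw [mem_Icc]; omega)] using (α i).finrank_range_le
  have hpair := add_succ_eq_sum_of_sub_two_eq (fun i => (-1 : ℝ) ^ i * Module.finrank ℚ (HS i))
    (fun i => (-1) ^ i * Module.finrank ℚ (LinearMap.range (α i)))
    (fun i => (-1) ^ i * Module.finrank ℚ (HB i)) (fun i => by
      have hsub := congrArg (Nat.cast : ℕ → ℝ) (finrank_add_finrank_eq_of_exact hαβ hβγ hγα i)
      push_cast at hsub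
      simp only [neg_one_zpow_sub_two, neg_one_zpow_sub_one]
      linear_combination (-1 : ℝ) ^ i * hsub)
    (min N₁ (-N₀)) N₀ (Icc (-(N₀ : ℤ)) N₀) (by omega) (Icc_subset_Icc (min_le_right _ _) le_rfl)
    (fun i hi => by simp [hS0 i (by omega)])
    (fun i hi => by simp [ha0 i hi]) (fun i hi => by simp [hB0 i hi])
  exact tendsto_mean_of_add_succ_eq _ _ N₁ N₀
    (fun i hi => by simp [hS0 i hi]) hpair

/-- Mean Euler characteristic from a Gysin-type long exact sequence, index-positive case. -/
theorem stmt0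
    (HB HS : ℤ → Type) [∀ i, AddCommGroup (HB i)] [∀ i, Module ℚ (HB i)]
    [∀ i, AddCommGroup (HS i)] [∀ i, Module ℚ (HS i)]
    [∀ i, FiniteDimensional ℚ (HB i)] [∀ i, FiniteDimensional ℚ (HS i)]
    (α : ∀ i : ℤ, HB i →ₗ[ℚ] HS i)
    (β : ∀ i : ℤ, HS i →ₗ[ℚ] HS (i - 2))
    (γ : ∀ i : ℤ, HS (i - 2) →ₗ[ℚ] HB (i - 1))
    (hαβ : ∀ i, Function.Exact (α i) (β i))
    (hβγ : ∀ i, Function.Exact (β i) (γ i))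
    (hγα : ∀ i, Function.Exact (γ i) (α (i - 1)))
    (N₀ : ℕ) (hvanish : ∀ i : ℤ, (N₀ : ℤ) < |i| → Subsingleton (HB i))
    (C : ℕ) (hbound : ∀ i, Module.finrank ℚ (HS i) < C)
    (N₁ : ℤ) (hidxpos : ∀ i < N₁, Subsingleton (HS i)) :
    Tendsto
      (fun N : ℕ =>
        (1 / (N : ℝ)) *
          ∑ i ∈ Finset.Icc (-(N : ℤ)) (N : ℤ), (-1 : ℝ) ^ i * (Module.finrank ℚ (HS i) : ℝ))
      atTop
      (𝓝 ((∑ i ∈ Finset.Icc (-(N₀ : ℤ)) (N₀ : ℤ),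
            (-1 : ℝ) ^ i * (Module.finrank ℚ (HB i) : ℝ)) / 2)) :=
  stmt0_general HB HS α β γ hαβ hβγ hγα N₀ hvanish N₁ hidxpos
end

section
/- For integers n, d with n > 3 and 2 ≤ d ≤ n, the quantity f_n(d) := (1-d)^n (1 + n d - d²) - (1 - d²) is nonzero. -/
/-- `f_n(d) = (1-d)^n(1+nd-d²)-(1-d²)` is nonzero for integers `2 ≤ d ≤ n`, `n > 3`. -/
theorem stmt10 (n : ℕ) (hn : 3 < n) (d : ℤ) (hd2 : 2 ≤ d) (hdn : d ≤ (n : ℤ)) :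
    (1 - d) ^ n * (1 + (n : ℤ) * d - d ^ 2) - (1 - d ^ 2) ≠ 0 := by
  intro h
  have hn4 : (4 : ℤ) ≤ (n : ℤ) := by exact_mod_cast hn
  have hX : (0 : ℤ) < 1 + (n : ℤ) * d - d ^ 2 := by nlinarith
  have h' : (1 - d) ^ n * (1 + (n : ℤ) * d - d ^ 2) = 1 - d ^ 2 := by linarith
  have habs : (d - 1) ^ n * (1 + (n : ℤ) * d - d ^ 2) = d ^ 2 - 1 := by
    have h1 : |(1 - d) ^ n * (1 + (n : ℤ) * d - d ^ 2)| = |1 - d ^ 2| := by rw [h']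
    rw [abs_mul, abs_pow] at h1
    have h2 : |1 - d| = d - 1 := by rw [abs_sub_comm]; exact abs_of_nonneg (by linarith)
    have h3 : |1 + (n : ℤ) * d - d ^ 2| = 1 + (n : ℤ) * d - d ^ 2 := abs_of_pos hX
    have h4 : |1 - d ^ 2| = d ^ 2 - 1 := by
      rw [abs_sub_comm]; exact abs_of_nonneg (by nlinarith)
    rw [h2, h3, h4] at h1
    exact h1
  -- show the left side is strictly bigger, contradiction
  rcases eq_or_lt_of_le hd2 with hd | hd3
  · -- d = 2
    subst hd
    have : ((1 : ℤ)) ^ n = 1 := one_pow n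
    norm_num at habs
    omega
  · -- d ≥ 3
    have hd3' : (3 : ℤ) ≤ d := hd3
    have h1le : (1 : ℤ) ≤ d - 1 := by linarith
    have hp4 : (d - 1) ^ 4 ≤ (d - 1) ^ n := pow_le_pow_right₀ h1le (by omega)
    have hX1 : (1 : ℤ) ≤ 1 + (n : ℤ) * d - d ^ 2 := by linarith
    have hpn : (0 : ℤ) ≤ (d - 1) ^ n := by positivity
    have hbig : (d - 1) ^ n ≤ (d - 1) ^ n * (1 + (n : ℤ) * d - d ^ 2) :=
      le_mul_of_one_le_right hpn hX1
    have ht : (2 : ℤ) ≤ d - 1 := by linarith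
    have : (d - 1) ^ 4 > d ^ 2 - 1 := by
      nlinarith [mul_nonneg (sq_nonneg (d - 1)) (show (0:ℤ) ≤ (d-1)^2 - 4 by nlinarith), sq_nonneg (d-1)]
    linarith
end

section
/- For integers n ≥ 4 and d ≥ 2, let f_n'(d) = (1-d)^{n-1}(d((n+2)d - (n²+n+2))) + 2d be the derivative of f_n(d) = (1-d)^n(1+nd-d²)-(1-d²). Then for real d in the interval [2, n-2]: if n is even then f_n'(d) > 0, and if n is odd then f_n'(d) < 0. -/
/-! On `[2, n - 2]` the linear factor `(n + 2) d - (n² + n + 2)` is at most `-(n + 6)` and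
`1 - d ≤ -1`, so the sign of `(1 - d)^(n-1)` decides. For even `n` the first term is positive;
for odd `n` it is at most `d · (-(n + 6))`, since `(d - 1)^(n-1) ≥ 1`, which outweighs `2d`. -/

theorem hasDerivAt_one_sub_pow_mul_quadratic_sub (n : ℕ) (hn : n ≠ 0) (x : ℝ) :
    HasDerivAt (fun x : ℝ => (1 - x) ^ n * (1 + (n : ℝ) * x - x ^ 2) - (1 - x ^ 2))
      ((1 - x) ^ (n - 1) * (x * (((n : ℝ) + 2) * x - ((n : ℝ) ^ 2 + (n : ℝ) + 2))) + 2 * x) x := by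
  have hlin : HasDerivAt (fun x : ℝ => 1 - x) (-1) x := by
    simpa using (hasDerivAt_id x).const_sub 1
  have hquad : HasDerivAt (fun x : ℝ => 1 + (n : ℝ) * x - x ^ 2) (n - 2 * x) x := by
    refine ((((hasDerivAt_id' x).const_mul (n : ℝ)).const_add 1).sub
      (hasDerivAt_pow 2 x)).congr_deriv ?_
    ring
  have hsq : HasDerivAt (fun x : ℝ => 1 - x ^ 2) (-(2 * x)) x := by
    simpa using (hasDerivAt_pow 2 x).const_sub 1
  refine (((hlin.pow n).mul hquad).sub hsq).congr_deriv ?_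
  obtain ⟨m, rfl⟩ := Nat.exists_eq_succ_of_ne_zero hn
  simp only [Pi.pow_apply, Nat.succ_eq_add_one, Nat.add_sub_cancel, Nat.cast_add_one]
  ring

theorem linear_factor_le_of_mem_Icc {n d : ℝ} (hd : d ∈ Set.Icc 2 (n - 2)) :
    (n + 2) * d - (n ^ 2 + n + 2) ≤ -(n + 6) := by
  obtain ⟨hd₂, hdn⟩ := hd
  nlinarith [mul_le_mul_of_nonneg_left hdn (by linarith : (0 : ℝ) ≤ n + 2)]

theorem one_sub_pow_mul_add_pos_of_odd {k : ℕ} (hk : Odd k) {d b : ℝ} (hd : 1 < d) (hb : b < 0) :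
    0 < (1 - d) ^ k * (d * b) + 2 * d := by
  have hpow : (1 - d) ^ k < 0 := hk.pow_neg (by linarith)
  nlinarith [mul_pos_of_neg_of_neg hpow (mul_neg_of_pos_of_neg (by linarith : 0 < d) hb)]

theorem one_sub_pow_mul_add_neg_of_even {k : ℕ} (hk : Even k) {d b : ℝ} (hd : 2 ≤ d) (hb : b < -2) :
    (1 - d) ^ k * (d * b) + 2 * d < 0 := by
  have hpow : 1 ≤ (1 - d) ^ k := by
    rw [← hk.neg_pow, neg_sub]
    exact one_le_pow₀ (by linarith)
  have hdb : d * b < 0 := mul_neg_of_pos_of_neg (by linarith) (by linarith)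
  nlinarith [mul_le_mul_of_nonpos_right hpow hdb.le]

theorem stmt14_general (n : ℕ) (d : ℝ) (hd : d ∈ Set.Icc (2 : ℝ) ((n : ℝ) - 2)) :
    HasDerivAt (fun x : ℝ => (1 - x) ^ n * (1 + (n : ℝ) * x - x ^ 2) - (1 - x ^ 2))
      ((1 - d) ^ (n - 1) * (d * (((n : ℝ) + 2) * d - ((n : ℝ) ^ 2 + (n : ℝ) + 2))) + 2 * d) d ∧
    (Even n →
      0 < (1 - d) ^ (n - 1) * (d * (((n : ℝ) + 2) * d - ((n : ℝ) ^ 2 + (n : ℝ) + 2))) + 2 * d) ∧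
    (Odd n →
      (1 - d) ^ (n - 1) * (d * (((n : ℝ) + 2) * d - ((n : ℝ) ^ 2 + (n : ℝ) + 2))) + 2 * d < 0) := by
  have hfactor := linear_factor_le_of_mem_Icc hd
  obtain ⟨hd₂, hdn⟩ := hd
  have hn : 1 ≤ n := by exact_mod_cast (by linarith : (1 : ℝ) ≤ n)
  refine ⟨hasDerivAt_one_sub_pow_mul_quadratic_sub n (by omega) d, fun he => ?_, fun ho => ?_⟩
  · exact one_sub_pow_mul_add_pos_of_odd (Nat.Even.sub_odd hn he odd_one) (by linarith) (by linarith)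
  · exact one_sub_pow_mul_add_neg_of_even (Nat.Odd.sub_odd ho odd_one) hd₂ (by linarith)

/-- `f_n'(d) = (1-d)^{n-1} d((n+2)d - (n²+n+2)) + 2d` is the derivative of
`f_n(d) = (1-d)^n(1+nd-d²)-(1-d²)`, and on `[2, n-2]` it is positive for even `n`
and negative for odd `n`. -/
theorem stmt14 (n : ℕ) (hn : 4 ≤ n) (d : ℝ) (hd : d ∈ Set.Icc (2 : ℝ) ((n : ℝ) - 2)) :
    HasDerivAt (fun x : ℝ => (1 - x) ^ n * (1 + (n : ℝ) * x - x ^ 2) - (1 - x ^ 2))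
      ((1 - d) ^ (n - 1) * (d * (((n : ℝ) + 2) * d - ((n : ℝ) ^ 2 + (n : ℝ) + 2))) + 2 * d) d ∧
    (Even n →
      0 < (1 - d) ^ (n - 1) * (d * (((n : ℝ) + 2) * d - ((n : ℝ) ^ 2 + (n : ℝ) + 2))) + 2 * d) ∧
    (Odd n →
      (1 - d) ^ (n - 1) * (d * (((n : ℝ) + 2) * d - ((n : ℝ) ^ 2 + (n : ℝ) + 2))) + 2 * d < 0) :=
  stmt14_general n d hd
end
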